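/- Let D be an oriented knot diagram with n ≥ 1 crossings, modeled by a Gauss code g. Then D is a one-bridge diagram if and only if X_D(t) = 1 + t + t² + ⋯ + t^(n−1). -/

import Mathlib

open Polynomial Finset

/-- An oriented knot diagram with `n` crossings, modeled by its oriented Gauss code. -/
structure GaussCode (n : ℕ) where
  g : ZMod (2 * n) → Fin n × Bool
  o : Fin n → ZMod (2 * n)
  u : Fin n → ZMod (2 * n)
  over_iff : ∀ (c : Fin n) (e : ZMod (2 * n)), g e = (c, true) ↔ e = o c
  under_iff : ∀ (c : Fin n) (e : ZMod (2 * n)), g e = (c, false) ↔ e = u c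

namespace GaussCode

variable {n : ℕ}

/-- The warping degree of the base position `e`: the number of crossings whose
under-passage occurs strictly before its over-passage when traversing the diagram
starting at `e`. -/
def d (D : GaussCode n) (e : ZMod (2 * n)) : ℕ :=
  (Finset.univ.filter fun c : Fin n => (D.u c - e).val < (D.o c - e).val).card

/-- The warping crossing polynomial. -/
noncomputable def Xpoly (D : GaussCode n) : Polynomial ℤ :=
  ∑ c : Fin n, Polynomial.X ^ D.d (D.o c)

/-- The warping polynomial. -/
noncomputable def Wpoly (D : GaussCode n) : Polynomial ℤ :=
  ∑ k ∈ Finset.range (2 * n), Polynomial.X ^ D.d (k : ZMod (2 * n))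

/-- The warping degree of the diagram: minimum over all base positions. -/
noncomputable def wdeg (D : GaussCode n) : ℕ :=
  sInf (Set.range fun e : ZMod (2 * n) => D.d e)

/-- The diagram is alternating. -/
def Alternating (D : GaussCode n) : Prop :=
  ∀ e : ZMod (2 * n), (D.g e).2 ≠ (D.g (e + 1)).2

end GaussCode

/-! Moving the base point across an over-passage raises the warping degree by one, across an
under-passage lowers it by one. If the over-passages form a single bridge starting at `a`, then
`d a = 0` and the over-passage `a + j` has degree `j`. Conversely, `X_D = 1 + t + ⋯ + t^(n-1)`
says that the over-passages have the degrees `0, …, n - 1`, each exactly once; walking on from the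
over-passage of degree `0`, an under-passage within the first `n` steps would make the next
over-passage repeat a degree already used. -/

theorem ZMod.val_sub_add_one_add_one {m : ℕ} [NeZero m] {x e : ZMod m} (h : x ≠ e) :
    (x - (e + 1)).val + 1 = (x - e).val := by
  have hpos : 0 < (x - e).val := ZMod.val_pos.mpr (sub_ne_zero.mpr h)
  have hcast : (((x - e).val - 1 : ℕ) : ZMod m) = x - (e + 1) := by
    rw [Nat.cast_sub hpos, ZMod.natCast_zmod_val, Nat.cast_one]; ring
  rw [← hcast, ZMod.val_natCast_of_lt (by have := (x - e).val_lt; omega)]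
  omega

theorem ZMod.val_sub_add_one_self {m : ℕ} [NeZero m] (e : ZMod m) :
    (e - (e + 1)).val = m - 1 := by
  obtain ⟨k, rfl⟩ := Nat.exists_eq_succ_of_ne_zero (NeZero.ne m)
  rw [sub_add_cancel_left, ZMod.val_neg_one, Nat.succ_sub_one]

theorem Polynomial.coeff_multiset_sum_X_pow {R : Type*} [Semiring R] (s : Multiset ℕ) (k : ℕ) :
    ((s.map (X ^ ·)).sum : Polynomial R).coeff k = s.count k := by
  induction s using Multiset.induction_on with
  | empty => simp
  | cons a s ih =>
    simp only [Multiset.map_cons, Multiset.sum_cons, coeff_add, ih, coeff_X_pow,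
      Multiset.count_cons]
    split_ifs <;> simp_all [add_comm]

theorem Polynomial.multiset_sum_X_pow_injective {R : Type*} [Semiring R] [CharZero R] :
    Function.Injective fun s : Multiset ℕ => ((s.map (X ^ ·)).sum : Polynomial R) := by
  intro s t h
  ext k
  simpa only [coeff_multiset_sum_X_pow, Nat.cast_inj] using congr_arg (coeff · k) h

theorem ZMod.natCast_injOn_Iio (m : ℕ) : Set.InjOn (Nat.cast : ℕ → ZMod m) (Set.Iio m) :=
  fun a ha b hb h => by rw [← ZMod.val_natCast_of_lt ha, h, ZMod.val_natCast_of_lt hb]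

namespace GaussCode

variable {n : ℕ} (D : GaussCode n)

/-- The warping crossing points for the base point `e`, counted by `D.d e`. -/
def warpingCrossings (e : ZMod (2 * n)) : Finset (Fin n) :=
  univ.filter fun c => (D.u c - e).val < (D.o c - e).val

theorem card_warpingCrossings (e : ZMod (2 * n)) : #(D.warpingCrossings e) = D.d e := rfl

theorem mem_warpingCrossings {e : ZMod (2 * n)} {c : Fin n} :
    c ∈ D.warpingCrossings e ↔ (D.u c - e).val < (D.o c - e).val := by
  simp [warpingCrossings]

def IsOneBridgeAt (a : ZMod (2 * n)) : Prop :=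
  ∀ e : ZMod (2 * n), (D.g e).2 = true ↔ ∃ j ∈ range n, e = a + (j : ZMod (2 * n))

theorem o_eq_iff {c : Fin n} {e : ZMod (2 * n)} : D.o c = e ↔ D.g e = (c, true) :=
  eq_comm.trans (D.over_iff c e).symm

theorem u_eq_iff {c : Fin n} {e : ZMod (2 * n)} : D.u c = e ↔ D.g e = (c, false) :=
  eq_comm.trans (D.under_iff c e).symm

theorem g_o (c : Fin n) : D.g (D.o c) = (c, true) := D.o_eq_iff.mp rfl

theorem g_u (c : Fin n) : D.g (D.u c) = (c, false) := D.u_eq_iff.mp rfl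

theorem o_g_of_over {e : ZMod (2 * n)} (h : (D.g e).2 = true) : D.o (D.g e).1 = e :=
  D.o_eq_iff.mpr (Prod.ext rfl h)

theorem u_g_of_under {e : ZMod (2 * n)} (h : (D.g e).2 = false) : D.u (D.g e).1 = e :=
  D.u_eq_iff.mpr (Prod.ext rfl h)

theorem o_ne_u (c : Fin n) : D.o c ≠ D.u c := fun h => by simpa [h, g_u] using D.g_o c

theorem o_injective : Function.Injective D.o := fun c c' h => by
  simpa [← h, g_o] using D.g_o c'

theorem eq_of_over_of_d_eq (hinj : Function.Injective fun c => D.d (D.o c)) {e e' : ZMod (2 * n)}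
    (he : (D.g e).2 = true) (he' : (D.g e').2 = true) (h : D.d e = D.d e') : e = e' := by
  rw [← D.o_g_of_over he, ← D.o_g_of_over he',
    @hinj (D.g e).1 (D.g e').1 (by simp only [D.o_g_of_over he, D.o_g_of_over he', h])]

theorem map_d_o_eq_range_of_Xpoly (h : D.Xpoly = ∑ i ∈ range n, X ^ i) :
    univ.val.map (fun c => D.d (D.o c)) = Multiset.range n :=
  Polynomial.multiset_sum_X_pow_injective (R := ℤ) <| by
    simpa only [Xpoly, sum_eq_multiset_sum, range_val, Multiset.map_map, Function.comp_def] using h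

variable [NeZero (2 * n)]

theorem mem_warpingCrossings_add_one_iff {c : Fin n} {e : ZMod (2 * n)} (ho : D.o c ≠ e)
    (hu : D.u c ≠ e) : c ∈ D.warpingCrossings (e + 1) ↔ c ∈ D.warpingCrossings e := by
  rw [mem_warpingCrossings, mem_warpingCrossings, ← ZMod.val_sub_add_one_add_one ho,
    ← ZMod.val_sub_add_one_add_one hu]
  omega

/-- Passing over-passage `e` makes its crossing a warping crossing and leaves the others alone. -/
theorem d_add_one_of_over {e : ZMod (2 * n)} (h : (D.g e).2 = true) :
    D.d (e + 1) = D.d e + 1 := by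
  set c := (D.g e).1
  have ho : D.o c = e := D.o_g_of_over h
  have hu : D.u c ≠ e := ho ▸ (D.o_ne_u c).symm
  have hnew : c ∈ D.warpingCrossings (e + 1) := by
    rw [mem_warpingCrossings, ho, ZMod.val_sub_add_one_self]
    have := ZMod.val_sub_add_one_add_one hu
    have := (D.u c - e).val_lt
    omega
  have hold : c ∉ D.warpingCrossings e := by simp [mem_warpingCrossings, ho]
  have hrest : D.warpingCrossings (e + 1) = insert c (D.warpingCrossings e) := by
    ext c'
    rcases eq_or_ne c' c with rfl | hc'
    · simp [hnew]
    · rw [mem_insert, or_iff_right hc']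
      refine D.mem_warpingCrossings_add_one_iff (fun h' => hc' ?_) (fun h' => ?_)
      · simp [c, ← h', g_o]
      · simp [← h', g_u] at h
  rw [← card_warpingCrossings, ← card_warpingCrossings, hrest, card_insert_of_notMem hold]

theorem d_eq_d_add_one_add_one_of_under {e : ZMod (2 * n)} (h : (D.g e).2 = false) :
    D.d e = D.d (e + 1) + 1 := by
  set c := (D.g e).1
  have hu : D.u c = e := D.u_g_of_under h
  have ho : D.o c ≠ e := hu ▸ D.o_ne_u c
  have hold : c ∈ D.warpingCrossings e := by
    rw [mem_warpingCrossings, hu, sub_self, ZMod.val_zero]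
    exact ZMod.val_pos.mpr (sub_ne_zero.mpr ho)
  have hnew : c ∉ D.warpingCrossings (e + 1) := by
    rw [mem_warpingCrossings, hu, ZMod.val_sub_add_one_self, not_lt]
    exact Nat.le_sub_one_of_lt (ZMod.val_lt _)
  have hrest : D.warpingCrossings e = insert c (D.warpingCrossings (e + 1)) := by
    ext c'
    rcases eq_or_ne c' c with rfl | hc'
    · simp [hold]
    · rw [mem_insert, or_iff_right hc']
      refine (D.mem_warpingCrossings_add_one_iff (fun h' => ?_) (fun h' => hc' ?_)).symm
      · simp [← h', g_o] at h
      · simp [c, ← h', g_u]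
  rw [← card_warpingCrossings, ← card_warpingCrossings, hrest, card_insert_of_notMem hnew]

theorem d_add_of_over {e : ZMod (2 * n)} {k : ℕ}
    (h : ∀ i < k, (D.g (e + (i : ZMod (2 * n)))).2 = true) :
    D.d (e + (k : ZMod (2 * n))) = D.d e + k := by
  induction k with
  | zero => simp
  | succ k ih =>
    rw [Nat.cast_succ, ← add_assoc, D.d_add_one_of_over (h k k.lt_succ_self),
      ih fun i hi => h i (hi.trans k.lt_succ_self), add_assoc]

theorem d_eq_d_add_add_of_under {e : ZMod (2 * n)} {k : ℕ}
    (h : ∀ i < k, (D.g (e + (i : ZMod (2 * n)))).2 = false) :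
    D.d e = D.d (e + (k : ZMod (2 * n))) + k := by
  induction k with
  | zero => simp
  | succ k ih =>
    rw [ih fun i hi => h i (hi.trans k.lt_succ_self),
      D.d_eq_d_add_one_add_one_of_under (h k k.lt_succ_self), Nat.cast_succ, add_assoc e]
    omega

theorem exists_first_over_after (e : ZMod (2 * n)) :
    ∃ M < 2 * n, (D.g (e + M)).2 = true ∧ D.d (e + M) + M = D.d e := by
  classical
  have hex : ∃ m, m < 2 * n ∧ (D.g (e + m)).2 = true :=
    ⟨(D.o (D.g e).1 - e).val, ZMod.val_lt _, by rw [ZMod.natCast_zmod_val, add_sub_cancel, g_o]⟩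
  obtain ⟨hlt, hover⟩ := Nat.find_spec hex
  refine ⟨Nat.find hex, hlt, hover, (D.d_eq_d_add_add_of_under fun i hi => ?_).symm⟩
  simpa [hi.trans hlt] using Nat.find_min hex hi

theorem over_add_of_d_eq_zero (hinj : Function.Injective fun c => D.d (D.o c))
    {e₀ : ZMod (2 * n)} (h₀ : D.d e₀ = 0) : ∀ j < n, (D.g (e₀ + j)).2 = true := by
  classical
  by_contra! hex
  simp only [ne_eq, Bool.not_eq_true] at hex
  obtain ⟨hjn, hj⟩ := Nat.find_spec hex
  set j := Nat.find hex
  have hbefore : ∀ i < j, (D.g (e₀ + i)).2 = true := fun i hi => by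
    simpa [hi.trans hjn] using Nat.find_min hex hi
  have hd : ∀ i ≤ j, D.d (e₀ + i) = i := fun i hi => by
    rw [D.d_add_of_over fun k hk => hbefore k (by omega), h₀, zero_add]
  obtain ⟨M, hM, hover, hdM⟩ := D.exists_first_over_after (e₀ + j)
  have hM₀ : M ≠ 0 := by rintro rfl; simp [hj] at hover
  set v := D.d (e₀ + j + M)
  rw [hd j le_rfl] at hdM
  have hv : e₀ + j + M = e₀ + v :=
    D.eq_of_over_of_d_eq hinj hover (hbefore v (by omega)) (hd v (by omega)).symm
  rw [add_assoc, add_right_inj, ← Nat.cast_add] at hv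
  have := ZMod.natCast_injOn_Iio (2 * n) (Set.mem_Iio.mpr (by omega))
    (Set.mem_Iio.mpr (by omega)) hv
  omega

theorem d_eq_zero_of_isOneBridgeAt {a : ZMod (2 * n)} (ha : D.IsOneBridgeAt a) : D.d a = 0 := by
  rw [← card_warpingCrossings, card_eq_zero, eq_empty_iff_forall_notMem]
  intro c hc
  obtain ⟨j, hj, hoc⟩ := (ha (D.o c)).mp (by rw [g_o])
  rw [mem_range] at hj
  have hov : (D.o c - a).val < n := by
    rwa [hoc, add_sub_cancel_left, ZMod.val_natCast_of_lt (by omega)]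
  have hu : (D.g (D.u c)).2 = true := (ha _).mpr ⟨_, mem_range.mpr
    ((D.mem_warpingCrossings.mp hc).trans hov), by rw [ZMod.natCast_zmod_val, add_sub_cancel]⟩
  simp [g_u] at hu

theorem d_add_of_isOneBridgeAt {a : ZMod (2 * n)} (ha : D.IsOneBridgeAt a) {j : ℕ} (hj : j < n) :
    D.d (a + j) = j := by
  rw [D.d_add_of_over fun i hi => (ha _).mpr ⟨i, mem_range.mpr (hi.trans hj), rfl⟩,
    D.d_eq_zero_of_isOneBridgeAt ha, zero_add]

theorem Xpoly_eq_sum_over :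
    D.Xpoly = ∑ e ∈ univ.filter (fun e => (D.g e).2 = true), X ^ D.d e := by
  have : univ.filter (fun e => (D.g e).2 = true) = univ.image D.o := by
    ext e
    simp only [mem_filter, mem_univ, true_and, mem_image]
    exact ⟨fun h => ⟨_, D.o_g_of_over h⟩, by rintro ⟨c, rfl⟩; simp [g_o]⟩
  rw [this, sum_image D.o_injective.injOn]
  rfl

theorem Xpoly_of_isOneBridgeAt {a : ZMod (2 * n)} (ha : D.IsOneBridgeAt a) :
    D.Xpoly = ∑ i ∈ range n, X ^ i := by
  have hover : univ.filter (fun e => (D.g e).2 = true) =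
      (range n).image fun j : ℕ => a + (j : ZMod (2 * n)) := by
    ext e
    rw [mem_filter, ha e, mem_image]
    exact ⟨fun ⟨_, j, hj, he⟩ => ⟨j, hj, he.symm⟩,
      fun ⟨j, hj, he⟩ => ⟨mem_univ _, j, hj, he.symm⟩⟩
  have hinj : Set.InjOn (fun j : ℕ => a + (j : ZMod (2 * n))) (range n) := fun i hi j hj h =>
    ZMod.natCast_injOn_Iio (2 * n) (Set.mem_Iio.mpr (by have := mem_range.mp hi; omega))
      (Set.mem_Iio.mpr (by have := mem_range.mp hj; omega)) (add_left_cancel h)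
  rw [D.Xpoly_eq_sum_over, hover, sum_image hinj]
  exact sum_congr rfl fun j hj => by rw [D.d_add_of_isOneBridgeAt ha (mem_range.mp hj)]

theorem isOneBridgeAt_of_Xpoly (h : D.Xpoly = ∑ i ∈ range n, X ^ i) :
    ∃ a, D.IsOneBridgeAt a := by
  have hmap := D.map_d_o_eq_range_of_Xpoly h
  have hlt : ∀ c, D.d (D.o c) < n := fun c =>
    Multiset.mem_range.mp (hmap ▸ Multiset.mem_map_of_mem _ (mem_univ_val c))
  have hinj : Function.Injective fun c => D.d (D.o c) := fun c c' =>
    Multiset.inj_on_of_nodup_map (hmap ▸ Multiset.nodup_range n) c (mem_univ_val c) c'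
      (mem_univ_val c')
  obtain ⟨c₀, -, h₀⟩ := Multiset.mem_map.mp (hmap ▸ Multiset.mem_range.mpr (D.g 0).1.pos)
  have hover := D.over_add_of_d_eq_zero hinj h₀
  refine ⟨D.o c₀, fun e => ⟨fun he => ?_, ?_⟩⟩
  · have hm : D.d e < n := D.o_g_of_over he ▸ hlt _
    refine ⟨D.d e, mem_range.mpr hm, D.eq_of_over_of_d_eq hinj he (hover _ hm) ?_⟩
    rw [D.d_add_of_over fun i hi => hover i (hi.trans hm), h₀, zero_add]
  · rintro ⟨j, hj, rfl⟩
    exact hover j (mem_range.mp hj)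

end GaussCode

theorem one_bridge_iff_Xpoly_general (n : ℕ) (D : GaussCode n) :
    (∃ a : ZMod (2 * n), ∀ e : ZMod (2 * n),
        (D.g e).2 = true ↔ ∃ j ∈ Finset.range n, e = a + (j : ZMod (2 * n))) ↔
      D.Xpoly = ∑ i ∈ Finset.range n, Polynomial.X ^ i := by
  have : NeZero (2 * n) := ⟨by have := (D.g 0).1.pos; omega⟩
  exact ⟨fun ⟨a, ha⟩ => D.Xpoly_of_isOneBridgeAt ha, D.isOneBridgeAt_of_Xpoly⟩

/-- A knot diagram with `n ≥ 1` crossings is a one-bridge diagram (its over-passages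
form a single run `a, a+1, …, a+n−1`) iff `X_D(t) = 1 + t + t² + ⋯ + t^(n−1)`. -/
theorem one_bridge_iff_Xpoly (n : ℕ) (hn : 1 ≤ n) (D : GaussCode n) :
    (∃ a : ZMod (2 * n), ∀ e : ZMod (2 * n),
        (D.g e).2 = true ↔ ∃ j ∈ Finset.range n, e = a + (j : ZMod (2 * n))) ↔
      D.Xpoly = ∑ i ∈ Finset.range n, Polynomial.X ^ i :=
  one_bridge_iff_Xpoly_general n D
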